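/- arXiv:1705.10533 — 5 statements merged into one kernel-verified Lean document; each statement's English description precedes it below -/
import Mathlib

section
/- Every regular language recognized by a totally defined reversible DFA in which every state is productive is a group language: in its minimal automaton each letter acts as a permutation of the states. -/
/-- A partial deterministic finite automaton (partial DFA). -/
structure PDFA (Q A : Type) where
  step : Q → A → Option Q
  init : Q
  acc : Q → Prop

namespace PDFA

variable {Q A : Type}

/-- Extended (partial) transition function on words. -/
def run (M : PDFA Q A) : Q → List A → Option Q
  | q, [] => some q
  | q, a :: w => (M.step q a).bind fun q' => M.run q' w

/-- The language accepted from state `q`. -/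
def LangFrom (M : PDFA Q A) (q : Q) : Set (List A) :=
  {w | ∃ q', M.run q w = some q' ∧ M.acc q'}

/-- The language of the automaton. -/
def Lang (M : PDFA Q A) : Set (List A) := M.LangFrom M.init

/-- An automaton is reversible if distinct states are never merged by a letter. -/
def Reversible (M : PDFA Q A) : Prop :=
  ∀ p q a r, M.step p a = some r → M.step q a = some r → p = q

/-- `Θ` is a congruence: an equivalence relation saturating the final states and
compatible with the (partial) action, including definedness. -/
def IsCongruence (M : PDFA Q A) (Θ : Q → Q → Prop) : Prop :=
  Equivalence Θ ∧
  (∀ p q, Θ p q → (M.acc p ↔ M.acc q)) ∧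
  (∀ p q a, Θ p q → ((M.step p a).isSome ↔ (M.step q a).isSome) ∧
    ∀ p' q', M.step p a = some p' → M.step q a = some q' → Θ p' q')

/-- A reversible congruence: a congruence whose factor automaton is reversible,
equivalently `p·a Θ q·a` (both defined) implies `p Θ q`. -/
def IsRevCongruence (M : PDFA Q A) (Θ : Q → Q → Prop) : Prop :=
  M.IsCongruence Θ ∧
  ∀ p q a p' q', M.step p a = some p' → M.step q a = some q' → Θ p' q' → Θ p q

def Reachable (M : PDFA Q A) (q : Q) : Prop := ∃ w, M.run M.init w = some q

def Productive (M : PDFA Q A) (q : Q) : Prop := ∃ w, w ∈ M.LangFrom q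

/-- A trim automaton: all states reachable and productive. -/
def Trim (M : PDFA Q A) : Prop := ∀ q, M.Reachable q ∧ M.Productive q

/-- The set of access words of a state. -/
def AccessWords (M : PDFA Q A) (q : Q) : Set (List A) :=
  {w | M.run M.init w = some q}

/-- An `∞`-state: reachable by infinitely many words. -/
def InfState (M : PDFA Q A) (q : Q) : Prop := (M.AccessWords q).Infinite

/-- A `1`-state: reachable by exactly one word. -/
def OneState (M : PDFA Q A) (q : Q) : Prop := ∃! w, w ∈ M.AccessWords q

/-- A `⊕`-state: neither a `1`-state nor an `∞`-state. -/
def PlusState (M : PDFA Q A) (q : Q) : Prop := ¬ M.OneState q ∧ ¬ M.InfState q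

/-- An irreversible state: reachable from two distinct states by a common word. -/
def IrrevState (M : PDFA Q A) (r : Q) : Prop :=
  ∃ p₁ p₂ u, p₁ ≠ p₂ ∧ M.run p₁ u = some r ∧ M.run p₂ u = some r

/-- Zig-zag states: the least set containing the `∞`-states, closed under defined
forward transitions, and containing every `⊕`-state with a transition into the set. -/
inductive ZigZag (M : PDFA Q A) : Q → Prop
  | inf {q} : M.InfState q → ZigZag M q
  | fwd {q a q'} : ZigZag M q → M.step q a = some q' → ZigZag M q'
  | back {q a q'} : M.PlusState q → M.step q a = some q' → ZigZag M q' → ZigZag M q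

/-- A reduced reversible automaton: trim, reversible, with no nontrivial reversible
congruence. -/
def ReducedReversible (M : PDFA Q A) : Prop :=
  M.Trim ∧ M.Reversible ∧ ∀ Θ, M.IsRevCongruence Θ → ∀ p q, Θ p q → p = q

/-- `n`-fold repetition of a word. -/
def wpow (w : List A) (n : ℕ) : List A := (List.replicate n w).flatten

end PDFA


/-!
In a total reversible DFA every letter `a` acts injectively, hence as a permutation of the
finite state set, so some power `a^n` with `n > 0` acts as the identity. Consequently
`u a^n w ∈ L ↔ u w ∈ L` for all words `u, w`: the left quotients of `L` by `u` and by `u a^n`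
coincide. In the minimal automaton states are determined by their left quotients, so `a^n`
acts there as the identity as well, which makes the action of `a` a bijection.
-/

namespace PDFA

variable {Q A : Type} (M : PDFA Q A)

theorem run_append (q : Q) (u v : List A) :
    M.run q (u ++ v) = (M.run q u).bind fun q' => M.run q' v := by
  induction u generalizing q with
  | nil => rfl
  | cons a u ih =>
    simp only [List.cons_append, run]
    cases M.step q a <;> simp [ih]

theorem langFrom_eq_of_run_init {u : List A} {p : Q} (hu : M.run M.init u = some p) :
    M.LangFrom p = {w | u ++ w ∈ M.Lang} := by
  ext w
  simp [Lang, LangFrom, run_append, hu]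

section Total

variable (htot : ∀ (q : Q) (a : A), (M.step q a).isSome)

def totalStep (a : A) (q : Q) : Q := (M.step q a).get (htot q a)

theorem step_eq_some_totalStep (q : Q) (a : A) : M.step q a = some (M.totalStep htot a q) :=
  (Option.some_get (htot q a)).symm

theorem run_replicate (a : A) (n : ℕ) (q : Q) :
    M.run q (List.replicate n a) = some ((M.totalStep htot a)^[n] q) := by
  induction n generalizing q with
  | zero => rfl
  | succ n ih =>
    rw [List.replicate_succ, run, step_eq_some_totalStep M htot, Option.bind_some, ih,
      Function.iterate_succ_apply]

theorem totalStep_injective (hrev : M.Reversible) (a : A) :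
    Function.Injective (M.totalStep htot a) := fun p q hpq =>
  hrev p q a _ (M.step_eq_some_totalStep htot p a)
    (by rw [M.step_eq_some_totalStep htot q a, hpq])

theorem exists_iterate_totalStep_eq_id [Finite Q] (hrev : M.Reversible) (a : A) :
    ∃ n, 0 < n ∧ (M.totalStep htot a)^[n] = id := by
  have := Fintype.ofFinite Q
  exact ⟨_, Nat.factorial_pos _,
    Function.injective_iff_iterate_factorial_card_eq_id.mp (M.totalStep_injective htot hrev a)⟩

theorem iterate_totalStep_eq_id_of_replicate_mem_lang_iff (hreach : ∀ q, M.Reachable q)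
    (hmin : ∀ p q, M.LangFrom p = M.LangFrom q → p = q) {a : A} {n : ℕ}
    (hn : ∀ u w, u ++ List.replicate n a ++ w ∈ M.Lang ↔ u ++ w ∈ M.Lang) :
    (M.totalStep htot a)^[n] = id := by
  funext q
  show _ = q
  obtain ⟨u, hu⟩ := hreach q
  have hua : M.run M.init (u ++ List.replicate n a) = some ((M.totalStep htot a)^[n] q) := by
    rw [run_append, hu, Option.bind_some, run_replicate]
  refine hmin _ _ ?_
  rw [M.langFrom_eq_of_run_init hua, M.langFrom_eq_of_run_init hu]
  ext w
  exact hn u w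

end Total

theorem exists_replicate_mem_lang_iff [Finite Q] (htot : ∀ (q : Q) (a : A), (M.step q a).isSome)
    (hrev : M.Reversible) (a : A) :
    ∃ n, 0 < n ∧ ∀ u w, u ++ List.replicate n a ++ w ∈ M.Lang ↔ u ++ w ∈ M.Lang := by
  obtain ⟨n, hn, hid⟩ := M.exists_iterate_totalStep_eq_id htot hrev a
  refine ⟨n, hn, fun u w => ?_⟩
  simp only [Lang, LangFrom, Set.mem_ofPred_eq, List.append_assoc, run_append,
    M.run_replicate htot, hid]
  cases M.run M.init u <;> simp

end PDFA

theorem Function.bijective_of_iterate_eq_id {α : Type*} {f : α → α} {n : ℕ} (hn : 0 < n)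
    (h : f^[n] = id) : Function.Bijective f := by
  obtain ⟨m, rfl⟩ := Nat.exists_eq_add_one_of_ne_zero hn.ne'
  refine ⟨Function.LeftInverse.injective (g := f^[m]) fun x => ?_,
    Function.RightInverse.surjective (g := f^[m]) fun x => ?_⟩
  · rw [← Function.iterate_succ_apply, h, id]
  · rw [← Function.iterate_succ_apply' f m, h, id]

theorem stmt2_general {Q Q' A : Type} [Finite Q] (M : PDFA Q A)
    (htot : ∀ (q : Q) (a : A), (M.step q a).isSome)
    (hrev : M.Reversible)
    (M' : PDFA Q' A)
    (htot' : ∀ (q : Q') (a : A), (M'.step q a).isSome)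
    (hreach' : ∀ q : Q', M'.Reachable q)
    (hmin' : ∀ p q : Q', M'.LangFrom p = M'.LangFrom q → p = q)
    (hlang : M'.Lang = M.Lang) :
    ∀ a : A, Function.Bijective (fun q : Q' => (M'.step q a).get (htot' q a)) := by
  intro a
  obtain ⟨n, hn, hneutral⟩ := M.exists_replicate_mem_lang_iff htot hrev a
  rw [← hlang] at hneutral
  exact Function.bijective_of_iterate_eq_id hn
    (M'.iterate_totalStep_eq_id_of_replicate_mem_lang_iff htot' hreach' hmin' hneutral)

/-- Every regular language recognized by a totally defined reversible
DFA with all states productive is a group language: in its minimal (total) automaton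
each letter acts as a permutation of the states. Here `M'` is a minimal total DFA
(all states reachable, pairwise inequivalent) recognizing the same language. -/
theorem stmt2 {Q Q' A : Type} [Finite Q] [Finite Q'] (M : PDFA Q A)
    (htot : ∀ (q : Q) (a : A), (M.step q a).isSome)
    (hrev : M.Reversible)
    (hprod : ∀ q : Q, M.Productive q)
    (M' : PDFA Q' A)
    (htot' : ∀ (q : Q') (a : A), (M'.step q a).isSome)
    (hreach' : ∀ q : Q', M'.Reachable q)
    (hmin' : ∀ p q : Q', M'.LangFrom p = M'.LangFrom q → p = q)
    (hlang : M'.Lang = M.Lang) :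
    ∀ a : A, Function.Bijective (fun q : Q' => (M'.step q a).get (htot' q a)) :=
  stmt2_general M htot hrev M' htot' hreach' hmin' hlang
end

section
/- Let M be the minimal partial DFA of a reversible language L with zig-zag states Z, all of which are reversible, and let N be a trim reversible partial DFA recognizing L with canonical homomorphism q ↦ q* into M. Then the relation Θ defined by p Θ q iff (p = q) or (p* = q* ∈ Z) is a reversible congruence on N. -/
namespace PDFA

variable {Q Qm A : Type}

theorem run_singleton (M : PDFA Q A) (q : Q) (a : A) : M.run q [a] = M.step q a := by
  cases h : M.step q a <;> simp [run, h]

theorem irrevState_of_step {M : PDFA Q A} {p q r : Q} {a : A} (hpq : p ≠ q)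
    (hp : M.step p a = some r) (hq : M.step q a = some r) : M.IrrevState r :=
  ⟨p, q, [a], hpq, by rwa [run_singleton], by rwa [run_singleton]⟩

theorem zigZag_of_not_oneState_of_step {M : PDFA Q A} {r r' : Q} {a : A}
    (hr : ¬ M.OneState r) (hstep : M.step r a = some r') (hr' : M.ZigZag r') : M.ZigZag r := by
  by_cases hinf : M.InfState r
  · exact .inf hinf
  · exact .back ⟨hr, hinf⟩ hstep hr'

theorem isSome_step_of_cons_mem_langFrom {M : PDFA Q A} {q : Q} {a : A} {w : List A}
    (h : a :: w ∈ M.LangFrom q) : (M.step q a).isSome := by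
  obtain ⟨_, hrun, _⟩ := h
  simp only [run, Option.bind_eq_some_iff] at hrun
  obtain ⟨q₁, hq₁, _⟩ := hrun
  simp [hq₁]

theorem cons_mem_langFrom_of_step {M : PDFA Q A} {q r : Q} {a : A} {w : List A}
    (hstep : M.step q a = some r) (hw : w ∈ M.LangFrom r) : a :: w ∈ M.LangFrom q := by
  obtain ⟨q', hrun, hacc⟩ := hw
  exact ⟨q', by simpa [run, hstep] using hrun, hacc⟩

section Homomorphism

variable {M : PDFA Qm A} {N : PDFA Q A} {f : Q → Qm}

theorem run_map (hfhom : ∀ q a q', N.step q a = some q' → M.step (f q) a = some (f q'))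
    {w : List A} {q q' : Q} (h : N.run q w = some q') : M.run (f q) w = some (f q') := by
  induction w generalizing q with
  | nil =>
    simp only [run, Option.some.injEq] at h ⊢
    rw [h]
  | cons a w ih =>
    simp only [run, Option.bind_eq_some_iff] at h ⊢
    obtain ⟨q₁, hq₁, hrest⟩ := h
    exact ⟨f q₁, hfhom q a q₁ hq₁, ih hrest⟩

theorem isSome_step_of_isSome_step_map (hMprod : ∀ r, M.Productive r)
    (hf : ∀ q, M.LangFrom (f q) = N.LangFrom q) {q : Q} {a : A}
    (h : (M.step (f q) a).isSome) : (N.step q a).isSome := by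
  obtain ⟨r, hr⟩ := Option.isSome_iff_exists.mp h
  obtain ⟨w, hw⟩ := hMprod r
  have hmem := cons_mem_langFrom_of_step hr hw
  rw [hf q] at hmem
  exact isSome_step_of_cons_mem_langFrom hmem

theorem isSome_step_iff_of_map_eq (hMprod : ∀ r, M.Productive r)
    (hf : ∀ q, M.LangFrom (f q) = N.LangFrom q)
    (hfhom : ∀ q a q', N.step q a = some q' → M.step (f q) a = some (f q'))
    {p q : Q} (he : f p = f q) (a : A) : (N.step p a).isSome ↔ (N.step q a).isSome := by
  have transfer : ∀ {p q : Q}, f p = f q → (N.step p a).isSome → (N.step q a).isSome := by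
    intro p q he hs
    obtain ⟨p', hp'⟩ := Option.isSome_iff_exists.mp hs
    refine isSome_step_of_isSome_step_map hMprod hf ?_
    rw [← he, hfhom p a p' hp']
    rfl
  exact ⟨transfer he, transfer he.symm⟩

theorem not_oneState_map_of_ne
    (hfhom : ∀ q a q', N.step q a = some q' → M.step (f q) a = some (f q'))
    (hfinit : f N.init = M.init) {p q : Q} (hp : N.Reachable p) (hq : N.Reachable q)
    (hpq : p ≠ q) (he : f p = f q) : ¬ M.OneState (f p) := by
  obtain ⟨wp, hwp⟩ := hp
  obtain ⟨wq, hwq⟩ := hq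
  have hwpq : wp ≠ wq := by
    rintro rfl
    exact hpq (Option.some.inj (hwp.symm.trans hwq))
  have hap : M.run M.init wp = some (f p) := hfinit ▸ run_map hfhom hwp
  have haq : M.run M.init wq = some (f p) := he ▸ hfinit ▸ run_map hfhom hwq
  rintro ⟨_, _, huniq⟩
  exact hwpq ((huniq wp hap).trans (huniq wq haq).symm)

theorem equivalence_eq_or_map_eq (f : Q → Qm) (Z : Qm → Prop) :
    Equivalence (fun p q => p = q ∨ (f p = f q ∧ Z (f p))) where
  refl _ := .inl rfl
  symm := by
    rintro p q (rfl | ⟨he, hz⟩)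
    · exact .inl rfl
    · exact .inr ⟨he.symm, he ▸ hz⟩
  trans := by
    rintro p q r (rfl | ⟨he, hz⟩) h
    · exact h
    · rcases h with rfl | ⟨he', _⟩
      · exact .inr ⟨he, hz⟩
      · exact .inr ⟨he.trans he', hz⟩

theorem isCongruence_eq_or_map_eq (hMprod : ∀ r, M.Productive r)
    (hf : ∀ q, M.LangFrom (f q) = N.LangFrom q)
    (hfhom : ∀ q a q', N.step q a = some q' → M.step (f q) a = some (f q'))
    (hfacc : ∀ q, N.acc q ↔ M.acc (f q))
    {Z : Qm → Prop} (hZ : ∀ r a r', Z r → M.step r a = some r' → Z r') :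
    N.IsCongruence (fun p q => p = q ∨ (f p = f q ∧ Z (f p))) := by
  refine ⟨equivalence_eq_or_map_eq f Z, ?_, ?_⟩
  · rintro p q (rfl | ⟨he, -⟩)
    · rfl
    · rw [hfacc, hfacc, he]
  · rintro p q a (rfl | ⟨he, hz⟩)
    · refine ⟨Iff.rfl, fun p' q' hp' hq' => .inl ?_⟩
      exact Option.some.inj (hp'.symm.trans hq')
    · refine ⟨isSome_step_iff_of_map_eq hMprod hf hfhom he a, fun p' q' hp' hq' => .inr ?_⟩
      have hp'M := hfhom p a p' hp'
      have hq'M := hfhom q a q' hq'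
      rw [he] at hp'M
      exact ⟨Option.some.inj (hp'M.symm.trans hq'M), hZ _ a _ hz (he ▸ hp'M)⟩

theorem map_eq_and_zigZag_of_step (hZrev : ∀ r, M.ZigZag r → ¬ M.IrrevState r)
    (hfhom : ∀ q a q', N.step q a = some q' → M.step (f q) a = some (f q'))
    (hfinit : f N.init = M.init) {p q p' q' : Q} {a : A}
    (hp : N.Reachable p) (hq : N.Reachable q) (hpq : p ≠ q)
    (hp' : N.step p a = some p') (hq' : N.step q a = some q')
    (he : f p' = f q') (hz : M.ZigZag (f p')) : f p = f q ∧ M.ZigZag (f p) := by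
  have hp'M := hfhom p a p' hp'
  have hq'M : M.step (f q) a = some (f p') := he ▸ hfhom q a q' hq'
  have hfpq : f p = f q := by
    by_contra hne
    exact hZrev _ hz (irrevState_of_step hne hp'M hq'M)
  exact ⟨hfpq, zigZag_of_not_oneState_of_step
    (not_oneState_map_of_ne hfhom hfinit hp hq hpq hfpq) hp'M hz⟩

end Homomorphism

end PDFA

theorem stmt6_general {Q Qm A : Type} (M : PDFA Qm A) (N : PDFA Q A)
    (hMtrim : M.Trim)
    (hZrev : ∀ r : Qm, M.ZigZag r → ¬ M.IrrevState r)
    (hNtrim : N.Trim) (hNrev : N.Reversible)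
    (f : Q → Qm)
    (hf : ∀ q : Q, M.LangFrom (f q) = N.LangFrom q)
    (hfhom : ∀ (q : Q) (a : A) (q' : Q),
      N.step q a = some q' → M.step (f q) a = some (f q'))
    (hfinit : f N.init = M.init)
    (hfacc : ∀ q : Q, N.acc q ↔ M.acc (f q)) :
    N.IsRevCongruence (fun p q => p = q ∨ (f p = f q ∧ M.ZigZag (f p))) := by
  refine ⟨PDFA.isCongruence_eq_or_map_eq (fun r => (hMtrim r).2) hf hfhom hfacc
    fun _ _ _ hz hstep => .fwd hz hstep, ?_⟩
  rintro p q a p' q' hp' hq' (rfl | ⟨he, hz⟩)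
  · exact .inl (hNrev p q a p' hp' hq')
  · by_cases hpq : p = q
    · exact .inl hpq
    · exact .inr (PDFA.map_eq_and_zigZag_of_step hZrev hfhom hfinit
        (hNtrim p).1 (hNtrim q).1 hpq hp' hq' he hz)

/-- If all zig-zag states of the minimal automaton `M` are reversible
and `N` is a trim reversible automaton recognizing the same language, with canonical
homomorphism `f : q ↦ q*`, then `p Θ q ↔ p = q ∨ (p* = q* ∈ Z)` is a reversible
congruence on `N`. -/
theorem stmt6 {Q Qm A : Type} (M : PDFA Qm A) (N : PDFA Q A)
    (hMtrim : M.Trim)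
    (hMmin : ∀ p q : Qm, M.LangFrom p = M.LangFrom q → p = q)
    (hZrev : ∀ r : Qm, M.ZigZag r → ¬ M.IrrevState r)
    (hNtrim : N.Trim) (hNrev : N.Reversible)
    (hlang : N.Lang = M.Lang)
    (f : Q → Qm)
    (hf : ∀ q : Q, M.LangFrom (f q) = N.LangFrom q)
    (hfhom : ∀ (q : Q) (a : A) (q' : Q),
      N.step q a = some q' → M.step (f q) a = some (f q'))
    (hfinit : f N.init = M.init)
    (hfacc : ∀ q : Q, N.acc q ↔ M.acc (f q)) :
    N.IsRevCongruence (fun p q => p = q ∨ (f p = f q ∧ M.ZigZag (f p))) :=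
  stmt6_general M N hMtrim hZrev hNtrim hNrev f hf hfhom hfinit hfacc
end

section
/- Let N' be a reversible partial DFA, k a prime, and suppose there exist states q₀,…,q_{k−1}, words w ∈ Σ⁺, states p′₀,…,p′_t and p″₀,…,p″_t, letters a₁,…,a_t, and directions e₁,…,e_t ∈ {+,−}, with p′₀ = q₀, p″₀ = q_i for some 0 < i < k, q_j·w = q_{j+1 mod k} for all j, for e_j = + : p′_{j−1}·a_j = p′_j and p″_{j−1}·a_j = p″_j, for e_j = − : p′_j·a_j = p′_{j−1} and p″_j·a_j = p″_{j−1}, and L(N′,p′_t) ≠ L(N′,p″_t). Then for every reversible congruence Θ on N′, the states q₀,…,q_{k−1} lie in pairwise distinct Θ-classes; in particular N′/Θ has at least k states. -/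
theorem Equivalence.forall_of_addLeft_invariant {G : Type*} [AddGroup G]
    [Fact (Nat.card G).Prime] {r : G → G → Prop} (hr : Equivalence r)
    (hinv : ∀ z x y, r x y → r (z + x) (z + y)) {x₀ y₀ : G} (hxy : r x₀ y₀) (hne : x₀ ≠ y₀) :
    ∀ x y, r x y := by
  let S : AddSubgroup G :=
    { carrier := {d | ∀ x, r x (x + d)}
      zero_mem' := fun x => by simpa using hr.refl x
      add_mem' := fun ha hb x => by simpa [add_assoc] using hr.trans (ha x) (hb (x + _))
      neg_mem' := fun {a} ha x => by simpa using hr.symm (ha (x + -a)) }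
  have hdiff : -x₀ + y₀ ∈ S := fun x => by
    simpa [add_assoc] using hinv (x + -x₀) x₀ y₀ hxy
  have hS : S = ⊤ := S.eq_bot_or_eq_top_of_prime_card.resolve_left fun h => by
    rw [h, AddSubgroup.mem_bot, neg_add_eq_zero] at hdiff
    exact hne hdiff
  intro x y
  simpa using (hS ▸ AddSubgroup.mem_top (-x + y) : -x + y ∈ S) x

theorem ZMod.rel_add_of_rel_add_one {k : ℕ} [NeZero k] {r : ZMod k → ZMod k → Prop}
    (h : ∀ x y, r x y → r (x + 1) (y + 1)) (z x y : ZMod k) (hxy : r x y) :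
    r (z + x) (z + y) := by
  rw [← ZMod.natCast_zmod_val z]
  induction z.val with
  | zero => simpa using hxy
  | succ n ih => simpa [add_right_comm _ (1 : ZMod k)] using h _ _ ih

namespace PDFA

variable {Q A : Type} {M : PDFA Q A} {Θ : Q → Q → Prop}

theorem IsCongruence.run_rel (hΘ : M.IsCongruence Θ) :
    ∀ (w : List A) {p q p' : Q}, Θ p q → M.run p w = some p' →
      ∃ q', M.run q w = some q' ∧ Θ p' q'
  | [], p, q, p', hpq, hp => by
    cases hp
    exact ⟨q, rfl, hpq⟩
  | b :: w, p, q, p', hpq, hp => by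
    obtain ⟨p₁, hp₁, hp⟩ := Option.bind_eq_some_iff.mp hp
    obtain ⟨q₁, hq₁⟩ := Option.isSome_iff_exists.mp
      ((hΘ.2.2 p q b hpq).1.mp (Option.isSome_iff_exists.mpr ⟨p₁, hp₁⟩))
    obtain ⟨q', hq', hpq'⟩ := hΘ.run_rel w ((hΘ.2.2 p q b hpq).2 p₁ q₁ hp₁ hq₁) hp
    exact ⟨q', by simp [run, hq₁, hq'], hpq'⟩

theorem IsCongruence.langFrom_subset (hΘ : M.IsCongruence Θ) {p q : Q} (hpq : Θ p q) :
    M.LangFrom p ⊆ M.LangFrom q := by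
  rintro u ⟨p', hp, hacc⟩
  obtain ⟨q', hq, hpq'⟩ := hΘ.run_rel u hpq hp
  exact ⟨q', hq, (hΘ.2.1 p' q' hpq').mp hacc⟩

theorem IsCongruence.langFrom_eq (hΘ : M.IsCongruence Θ) {p q : Q} (hpq : Θ p q) :
    M.LangFrom p = M.LangFrom q :=
  (hΘ.langFrom_subset hpq).antisymm (hΘ.langFrom_subset (hΘ.1.symm hpq))

theorem IsCongruence.run_cycle_rel_add_one (hΘ : M.IsCongruence Θ) {k : ℕ} {q : ZMod k → Q}
    {w : List A} (hcyc : ∀ j, M.run (q j) w = some (q (j + 1))) {x y : ZMod k}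
    (hxy : Θ (q x) (q y)) : Θ (q (x + 1)) (q (y + 1)) := by
  obtain ⟨r, hr, hxr⟩ := hΘ.run_rel w hxy (hcyc x)
  rw [hcyc y, Option.some_inj] at hr
  exact hr ▸ hxr

theorem IsRevCongruence.rel_of_zigzag (hΘ : M.IsRevCongruence Θ) {t : ℕ}
    {p' p'' : Fin (t + 1) → Q} {a : Fin t → A} {e : Fin t → Bool}
    (hfwd : ∀ j : Fin t, e j = true →
      M.step (p' j.castSucc) (a j) = some (p' j.succ) ∧
      M.step (p'' j.castSucc) (a j) = some (p'' j.succ))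
    (hbwd : ∀ j : Fin t, e j = false →
      M.step (p' j.succ) (a j) = some (p' j.castSucc) ∧
      M.step (p'' j.succ) (a j) = some (p'' j.castSucc))
    (h0 : Θ (p' 0) (p'' 0)) (j : Fin (t + 1)) : Θ (p' j) (p'' j) := by
  induction j using Fin.induction with
  | zero => exact h0
  | succ j ih =>
    cases he : e j with
    | true =>
      obtain ⟨h', h''⟩ := hfwd j he
      exact (hΘ.1.2.2 _ _ (a j) ih).2 _ _ h' h''
    | false =>
      obtain ⟨h', h''⟩ := hbwd j he
      exact hΘ.2 _ _ (a j) _ _ h' h'' ih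

end PDFA

theorem stmt8_general {Q A : Type} (N : PDFA Q A)
    (k : ℕ) (hk : k.Prime) (t : ℕ)
    (q : ZMod k → Q) (w : List A)
    (hcyc : ∀ j : ZMod k, N.run (q j) w = some (q (j + 1)))
    (i : ZMod k)
    (p' p'' : Fin (t + 1) → Q) (a : Fin t → A) (e : Fin t → Bool)
    (hp'0 : p' 0 = q 0) (hp''0 : p'' 0 = q i)
    (hfwd : ∀ j : Fin t, e j = true →
      N.step (p' j.castSucc) (a j) = some (p' j.succ) ∧
      N.step (p'' j.castSucc) (a j) = some (p'' j.succ))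
    (hbwd : ∀ j : Fin t, e j = false →
      N.step (p' j.succ) (a j) = some (p' j.castSucc) ∧
      N.step (p'' j.succ) (a j) = some (p'' j.castSucc))
    (hne : N.LangFrom (p' (Fin.last t)) ≠ N.LangFrom (p'' (Fin.last t)))
    (Θ : Q → Q → Prop) (hΘ : N.IsRevCongruence Θ) :
    ∀ j₁ j₂ : ZMod k, Θ (q j₁) (q j₂) → j₁ = j₂ := by
  intro j₁ j₂ hj
  by_contra hne'
  have : NeZero k := ⟨hk.ne_zero⟩
  have : Fact (Nat.card (ZMod k)).Prime := ⟨by rwa [Nat.card_zmod]⟩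
  have hcycle : ∀ x y, Θ (q x) (q y) :=
    (hΘ.1.1.comap q).forall_of_addLeft_invariant
      (ZMod.rel_add_of_rel_add_one fun _ _ => hΘ.1.run_cycle_rel_add_one hcyc) hj hne'
  exact hne (hΘ.1.langFrom_eq (hΘ.rel_of_zigzag hfwd hbwd (hp'0 ▸ hp''0 ▸ hcycle 0 i) _))

/-- The zig-zag pattern lemma. If a reversible automaton `N` contains a
`w`-cycle `q₀,…,q_{k−1}` of prime length `k` together with two zig-zag chains starting
at `q₀` and at `q_i` (`i ≠ 0`) and ending at inequivalent states, then any reversible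
congruence keeps the `q_j` in pairwise distinct classes. -/
theorem stmt8 {Q A : Type} (N : PDFA Q A) (hrev : N.Reversible)
    (k : ℕ) (hk : k.Prime) (t : ℕ)
    (q : ZMod k → Q) (w : List A) (hw : w ≠ [])
    (hcyc : ∀ j : ZMod k, N.run (q j) w = some (q (j + 1)))
    (i : ZMod k) (hi : i ≠ 0)
    (p' p'' : Fin (t + 1) → Q) (a : Fin t → A) (e : Fin t → Bool)
    (hp'0 : p' 0 = q 0) (hp''0 : p'' 0 = q i)
    (hfwd : ∀ j : Fin t, e j = true →
      N.step (p' j.castSucc) (a j) = some (p' j.succ) ∧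
      N.step (p'' j.castSucc) (a j) = some (p'' j.succ))
    (hbwd : ∀ j : Fin t, e j = false →
      N.step (p' j.succ) (a j) = some (p' j.castSucc) ∧
      N.step (p'' j.succ) (a j) = some (p'' j.castSucc))
    (hne : N.LangFrom (p' (Fin.last t)) ≠ N.LangFrom (p'' (Fin.last t)))
    (Θ : Q → Q → Prop) (hΘ : N.IsRevCongruence Θ) :
    ∀ j₁ j₂ : ZMod k, Θ (q j₁) (q j₂) → j₁ = j₂ :=
  stmt8_general N k hk t q w hcyc i p' p'' a e hp'0 hp''0 hfwd hbwd hne Θ hΘ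
end

section
/- Let N be a trim reversible partial DFA and q a state lying in a nontrivial SCC, with av a shortest nonempty word such that q·(av) = q (a a letter). For any k ≥ 1, define N″ on Q × {0,…,k−1} with (q′,i)·b = (q′b, (i+1) mod k) if q′ = q and b = a, and (q′b, i) otherwise. Then N″ is reversible, each state (q′,i) is equivalent to q′, and the states (q,0),…,(q,k−1) satisfy (q,i)·(av) = (q, (i+1) mod k). -/
open scoped Classical

/-!
`N''` is the skew product of `N` with the group `ZMod k`, along the cocycle that is `1` on the
transition `(q, a)` and `0` elsewhere. Projecting to the first coordinate is a simulation that
respects acceptance, so languages are preserved; since each letter acts on the counter by a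
translation, reversibility of `N` lifts to `N''`. By minimality of `av`, the `v`-path from `q·a`
back to `q` never visits `q` before its end, so along `av` the counter moves exactly once.
-/

namespace PDFA

variable {Q Q' A : Type}

theorem run_map_of_step_map {M : PDFA Q' A} {N : PDFA Q A} {g : Q' → Q}
    (h : ∀ x b, (M.step x b).map g = N.step (g x) b) (x : Q') (w : List A) :
    (M.run x w).map g = N.run (g x) w := by
  induction w generalizing x with
  | nil => rfl
  | cons b w ih =>
    simp only [run, Option.map_bind, ← h, Option.bind_map, Function.comp_def, ih]

theorem langFrom_eq_of_step_map {M : PDFA Q' A} {N : PDFA Q A} {g : Q' → Q}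
    (h : ∀ x b, (M.step x b).map g = N.step (g x) b) (hacc : ∀ x, M.acc x ↔ N.acc (g x))
    (x : Q') : M.LangFrom x = N.LangFrom (g x) := by
  ext w
  simp only [LangFrom, Set.mem_ofPred_eq, ← run_map_of_step_map h, Option.map_eq_some_iff]
  constructor
  · rintro ⟨y, hy, hacc_y⟩
    exact ⟨g y, ⟨y, hy, rfl⟩, (hacc y).mp hacc_y⟩
  · rintro ⟨_, ⟨y, hy, rfl⟩, hacc_y⟩
    exact ⟨y, hy, (hacc y).mpr hacc_y⟩

def IsSkewExtension {G : Type} [Add G] (N : PDFA Q A) (c : Q → A → G) (M : PDFA (Q × G) A) :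
    Prop :=
  ∀ p i b, M.step (p, i) b = (N.step p b).map fun p' => (p', i + c p b)

namespace IsSkewExtension

variable {G : Type} {N : PDFA Q A} {c : Q → A → G} {M : PDFA (Q × G) A}

theorem step_map_fst [Add G] (hM : IsSkewExtension N c M) (x : Q × G) (b : A) :
    (M.step x b).map Prod.fst = N.step x.1 b := by
  rw [hM, Option.map_map]
  exact Option.map_id'

theorem langFrom_eq [Add G] (hM : IsSkewExtension N c M) (hacc : ∀ p i, M.acc (p, i) ↔ N.acc p)
    (p : Q) (i : G) : M.LangFrom (p, i) = N.LangFrom p :=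
  langFrom_eq_of_step_map hM.step_map_fst (fun x => hacc x.1 x.2) (p, i)

theorem reversible [Add G] [IsRightCancelAdd G] (hM : IsSkewExtension N c M)
    (hN : N.Reversible) : M.Reversible := by
  rintro ⟨p₁, i₁⟩ ⟨p₂, i₂⟩ b ⟨r, j⟩ h₁ h₂
  rw [hM, Option.map_eq_some_iff] at h₁ h₂
  simp only [Prod.mk.injEq] at h₁ h₂
  obtain ⟨_, hs₁, rfl, hj₁⟩ := h₁
  obtain ⟨_, hs₂, rfl, hj₂⟩ := h₂
  obtain rfl := hN _ _ _ _ hs₁ hs₂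
  exact Prod.ext rfl (add_right_cancel (hj₁.trans hj₂.symm))

theorem run_eq_of_counter_zero [AddZeroClass G] (hM : IsSkewExtension N c M) {p p' : Q}
    {w : List A} (hrun : N.run p w = some p')
    (hzero : ∀ w₁ b w₂, w = w₁ ++ b :: w₂ → ∀ r, N.run p w₁ = some r → c r b = 0) (i : G) :
    M.run (p, i) w = some (p', i) := by
  induction w generalizing p with
  | nil => simpa [run] using hrun
  | cons b w ih =>
    obtain ⟨p₁, hs, hrun₁⟩ := Option.bind_eq_some_iff.mp hrun
    have hc : c p b = 0 := hzero [] b w rfl p rfl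
    have hstep : M.run (p, i) (b :: w) = M.run (p₁, i) w := by
      simp only [run, hM p i b, hs, hc, add_zero, Option.map_some, Option.bind_some]
    refine hstep.trans (ih hrun₁ fun w₁ b' w₂ hw r hr => ?_)
    exact hzero (b :: w₁) b' w₂ (by rw [hw]; rfl) r (by simp only [run, hs, Option.bind_some, hr])

end IsSkewExtension

end PDFA

theorem stmt15_general {Q A : Type} (N : PDFA Q A) (hNrev : N.Reversible)
    (q : Q) (a : A) (v : List A)
    (hloop : N.run q (a :: v) = some q)
    (hshort : ∀ u : List A, u ≠ [] → N.run q u = some q →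
      (a :: v).length ≤ u.length)
    (k : ℕ)
    (N'' : PDFA (Q × ZMod k) A)
    (hacc : ∀ (p : Q) (i : ZMod k), N''.acc (p, i) ↔ N.acc p)
    (hstep : ∀ (p : Q) (i : ZMod k) (b : A), N''.step (p, i) b =
      (N.step p b).map fun p' => if p = q ∧ b = a then (p', i + 1) else (p', i)) :
    N''.Reversible ∧
    (∀ (p : Q) (i : ZMod k), N''.LangFrom (p, i) = N.LangFrom p) ∧
    (∀ i : ZMod k, N''.run (q, i) (a :: v) = some (q, i + 1)) := by
  set c : Q → A → ZMod k := fun p b => if p = q ∧ b = a then 1 else 0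
  have hskew : N.IsSkewExtension c N'' := by
    intro p i b
    rw [hstep]
    congr 1
    funext p'
    split_ifs <;> simp [c, *]
  refine ⟨hskew.reversible hNrev, hskew.langFrom_eq hacc, fun i => ?_⟩
  obtain ⟨q₁, hqa, hv⟩ := Option.bind_eq_some_iff.mp hloop
  have hzero : ∀ w₁ b w₂, v = w₁ ++ b :: w₂ → ∀ r, N.run q₁ w₁ = some r → c r b = 0 := by
    rintro w₁ b w₂ rfl r hr
    refine if_neg fun ⟨hrq, _⟩ => ?_
    have := hshort (a :: w₁) (List.cons_ne_nil _ _) (by simp [PDFA.run, hqa, hr, hrq])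
    simp only [List.length_cons, List.length_append] at this
    omega
  simp [PDFA.run, hskew _ _ a, hqa, c, hskew.run_eq_of_counter_zero hv hzero]

/-- The cycle blow-up construction. If `q` lies in a nontrivial SCC of a
trim reversible partial DFA `N` and `a::v` is a shortest nonempty word with
`q·(av) = q`, then the automaton `N''` on `Q × ZMod k` that increments the counter
exactly on the transition `(q, a)` is reversible, state `(q',i)` is equivalent to
`q'`, and `(q,i)·(av) = (q, i+1)`. -/
theorem stmt15 {Q A : Type} (N : PDFA Q A) (hNtrim : N.Trim) (hNrev : N.Reversible)
    (q : Q) (a : A) (v : List A)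
    (hloop : N.run q (a :: v) = some q)
    (hshort : ∀ u : List A, u ≠ [] → N.run q u = some q →
      (a :: v).length ≤ u.length)
    (k : ℕ) (hk : 1 ≤ k)
    (N'' : PDFA (Q × ZMod k) A)
    (hinit : N''.init = (N.init, 0))
    (hacc : ∀ (p : Q) (i : ZMod k), N''.acc (p, i) ↔ N.acc p)
    (hstep : ∀ (p : Q) (i : ZMod k) (b : A), N''.step (p, i) b =
      (N.step p b).map fun p' => if p = q ∧ b = a then (p', i + 1) else (p', i)) :
    N''.Reversible ∧
    (∀ (p : Q) (i : ZMod k), N''.LangFrom (p, i) = N.LangFrom p) ∧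
    (∀ i : ZMod k, N''.run (q, i) (a :: v) = some (q, i + 1)) :=
  stmt15_general N hNrev q a v hloop hshort k N'' hacc hstep
end

section
/- Let M be a trim partial DFA. Every zig-zag state of M is reachable from the initial state by at least two distinct words (i.e., no zig-zag state is a 1-state). -/
/-!
Having two access words is inherited along every defining clause of zig-zag states:
an `∞`-state has infinitely many access words; appending a letter to two distinct access
words of `q` gives two distinct access words of `q·a`; and a `⊕`-state, reachable because
the automaton is trim, is not a `1`-state, so it has a second access word.
-/

namespace PDFA

variable {Q A : Type} (M : PDFA Q A)

theorem image_append_singleton_subset_accessWords {q q' : Q} {a : A}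
    (h : M.step q a = some q') :
    (· ++ [a]) '' M.AccessWords q ⊆ M.AccessWords q' := by
  rintro _ ⟨u, hu : M.run M.init u = some q, rfl⟩
  show M.run M.init (u ++ [a]) = some q'
  simp [run_append, hu, run, h]

variable {M}

theorem nontrivial_accessWords_of_step {q q' : Q} {a : A}
    (hq : (M.AccessWords q).Nontrivial) (h : M.step q a = some q') :
    (M.AccessWords q').Nontrivial :=
  (hq.image (List.append_left_injective [a])).mono
    (M.image_append_singleton_subset_accessWords h)

theorem PlusState.nontrivial_accessWords {q : Q} (hplus : M.PlusState q)
    (hreach : M.Reachable q) : (M.AccessWords q).Nontrivial := by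
  obtain ⟨u, hu⟩ := hreach
  by_contra hsub
  exact hplus.1 ⟨u, hu, fun v hv => Set.not_nontrivial_iff.mp hsub hv hu⟩

theorem ZigZag.nontrivial_accessWords (hM : M.Trim) {z : Q} (hz : M.ZigZag z) :
    (M.AccessWords z).Nontrivial := by
  induction hz with
  | inf hinf => exact hinf.nontrivial
  | fwd _ hstep ih => exact nontrivial_accessWords_of_step ih hstep
  | @back q _ _ hplus _ _ _ => exact hplus.nontrivial_accessWords (hM q).1

end PDFA

/-- In a trim partial DFA, every zig-zag state is reachable from the
initial state by at least two distinct words (no zig-zag state is a `1`-state). -/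
theorem stmt18 {Q A : Type} (M : PDFA Q A) (hMtrim : M.Trim)
    (z : Q) (hz : M.ZigZag z) :
    ∃ u v : List A, u ≠ v ∧ M.run M.init u = some z ∧ M.run M.init v = some z := by
  obtain ⟨u, hu, v, hv, huv⟩ := hz.nontrivial_accessWords hMtrim
  exact ⟨u, v, huv, hu, hv⟩
end
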